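/- arXiv:1707.04328 — 2 statements merged into one kernel-verified Lean document; each statement's English description precedes it below -/
import Mathlib

section
/- Let $\mu$ be a locally finite nonnegative Borel measure on $\mathbb{R}^d$, and let $\rho > 0$, $b > 0$ be such that for every nonnegative Schwartz function $\varphi : \mathbb{R}^d \to \mathbb{R}$ whose Fourier transform $\mathcal{F}\varphi$ is supported in the open ball $B(0;b)$, one has $\int_{\mathbb{R}^d} \varphi \, \mathrm{d}\mu = \rho \int_{\mathbb{R}^d} \varphi(x)\,\mathrm{d}x$. Then there exist constants $C, c > 0$ depending only on the dimension $d$ such that $\mu(Q) \le c\,\rho\, b^{-d}$ for every axis-parallel cube $Q \subset \mathbb{R}^d$ of side length $C b^{-1}$. -/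
open MeasureTheory Metric
open scoped FourierTransform RealInnerProductSpace BigOperators

noncomputable section

/-- Euclidean space `ℝ^d`. -/
abbrev Ed (d : ℕ) := EuclideanSpace ℝ (Fin d)

/-- The axis-parallel cube in `ℝ^d` with center `x` and side length `s`. -/
def cube {d : ℕ} (x : Ed d) (s : ℝ) : Set (Ed d) :=
  {y | ∀ i, |y i - x i| ≤ s / 2}

/-!
Let `g` be a smooth, even, nonnegative bump supported in `B(0, 1/2)` and `Φ := 𝓕⁻(g ⋆ g)`.
Then `𝓕 Φ = g ⋆ g` is supported in `B(0, 1)`, while `Φ(x) = (𝓕 g (-x))²` is real (as `g` is real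
and even), nonnegative, and `Φ(0) = (∫ g)² > 0`. By continuity, `Φ ≥ Φ(0)/2` on a cube of side `C`
around `0`. For `x₀ ∈ ℝ^d`, the test function `φ(x) = Φ(b(x - x₀))` has Fourier support in
`B(0, b)`, integral `b⁻ᵈ ∫ Φ`, and is at least `Φ(0)/2` on the cube of side `C b⁻¹` around `x₀`;
Markov's inequality then gives `μ(Q) ≤ (2 / Φ(0)) ∫ φ dμ = (2 ∫ Φ / Φ(0)) ρ b⁻ᵈ`.
-/

open scoped SchwartzMap

namespace Real

variable {V E : Type*} [NormedAddCommGroup V] [InnerProductSpace ℝ V] [FiniteDimensional ℝ V]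
  [MeasurableSpace V] [BorelSpace V] [NormedAddCommGroup E] [NormedSpace ℂ E]

theorem fourier_comp_sub_const (f : V → E) (a w : V) :
    𝓕 (fun x ↦ f (x - a)) w = 𝐞 (-⟪a, w⟫) • 𝓕 f w := by
  have h := congrFun (VectorFourier.fourierIntegral_comp_add_right 𝐞 volume (innerₗ V) f (-a)) w
  rw [map_neg, LinearMap.neg_apply, innerₗ_apply_apply] at h
  simp only [Function.comp_def, ← sub_eq_add_neg] at h
  exact h

theorem fourier_comp_smul (f : V → E) {c : ℝ} (hc : c ≠ 0) (w : V) :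
    𝓕 (fun x ↦ f (c • x)) w = |(c ^ Module.finrank ℝ V)⁻¹| • 𝓕 f (c⁻¹ • w) := by
  simp only [fourier_eq]
  rw [← Measure.integral_comp_smul]
  congr 1 with x
  rw [real_inner_smul_right, ← real_inner_smul_left, smul_smul, inv_mul_cancel₀ hc, one_smul]

theorem support_fourier_comp_smul_sub_subset {f : V → E} {c R : ℝ} (hc : 0 < c)
    (hf : Function.support (𝓕 f) ⊆ ball 0 R) (a : V) :
    Function.support (𝓕 fun x ↦ f (c • (x - a))) ⊆ ball 0 (c * R) := by
  intro w hw
  rw [Function.mem_support, fourier_comp_sub_const (fun y ↦ f (c • y)), fourier_comp_smul f hc.ne']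
    at hw
  have hw' : c⁻¹ • w ∈ ball 0 R := hf fun h ↦ hw (by rw [h, smul_zero, smul_zero])
  rw [mem_ball_zero_iff, norm_smul, norm_inv, Real.norm_of_nonneg hc.le, inv_mul_lt_iff₀ hc] at hw'
  exact mem_ball_zero_iff.2 hw'

theorem conj_fourier_ofReal (f : V → ℝ) (w : V) :
    starRingEnd ℂ (𝓕 (fun v ↦ (f v : ℂ)) w) = 𝓕 (fun v ↦ (f v : ℂ)) (-w) := by
  simp only [fourier_eq, ← integral_conj, Circle.smul_def, smul_eq_mul, map_mul,
    Complex.conj_ofReal, ← Circle.coe_inv_eq_conj, ← AddChar.map_neg_eq_inv, inner_neg_right]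

theorem ofReal_re_fourier_of_even {f : V → ℝ} (hf : ∀ v, f (-v) = f v) (w : V) :
    ((𝓕 (fun v ↦ (f v : ℂ)) w).re : ℂ) = 𝓕 (fun v ↦ (f v : ℂ)) w := by
  rw [← Complex.conj_eq_iff_re, conj_fourier_ofReal]
  have := fourier_comp_linearIsometry (LinearIsometryEquiv.neg ℝ (E := V)) (fun v ↦ (f v : ℂ)) w
  simpa [Function.comp_def, hf] using this.symm

end Real

section Rescale

variable {V F : Type*} [NormedAddCommGroup V] [NormedSpace ℝ V] [NormedAddCommGroup F]
  [NormedSpace ℝ F]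

theorem integral_comp_smul_sub [FiniteDimensional ℝ V] [MeasurableSpace V] [BorelSpace V]
    (μ : Measure V) [μ.IsAddHaarMeasure] (f : V → F) (c : ℝ) (a : V) :
    ∫ x, f (c • (x - a)) ∂μ = |(c ^ Module.finrank ℝ V)⁻¹| • ∫ x, f x ∂μ := by
  rw [integral_sub_right_eq_self (fun y ↦ f (c • y)) a, Measure.integral_comp_smul]

def SchwartzMap.rescale (f : 𝓢(V, F)) {c : ℝ} (hc : c ≠ 0) (a : V) : 𝓢(V, F) :=
  compSubConstCLM ℝ a
    (compCLMOfContinuousLinearEquiv ℝ (ContinuousLinearEquiv.smulLeft (Units.mk0 c hc)) f)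

@[simp]
theorem SchwartzMap.rescale_apply (f : 𝓢(V, F)) {c : ℝ} (hc : c ≠ 0) (a x : V) :
    f.rescale hc a x = f (c • (x - a)) := rfl

end Rescale

namespace BandlimitedKernel

section Bump

variable (V : Type*) [NormedAddCommGroup V] [InnerProductSpace ℝ V] [FiniteDimensional ℝ V]

def bump : ContDiffBump (0 : V) := ⟨1 / 4, 1 / 2, by norm_num, by norm_num⟩

def bumpC : 𝓢(V, ℂ) :=
  HasCompactSupport.toSchwartzMap (f := fun v ↦ (bump V v : ℂ))
    ((bump V).hasCompactSupport.comp_left Complex.ofReal_zero)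
    (Complex.ofRealCLM.contDiff.comp (bump V).contDiff)

variable {V}

theorem bumpC_apply (v : V) : bumpC V v = (bump V v : ℂ) := rfl

theorem support_bumpC : Function.support (bumpC V) = ball 0 (1 / 2) := by
  change _ = ball 0 (bump V).rOut
  rw [← (bump V).support_eq]
  ext v
  simp [bumpC_apply]

end Bump

variable {V : Type*} [NormedAddCommGroup V] [InnerProductSpace ℝ V] [FiniteDimensional ℝ V]
  [MeasurableSpace V] [BorelSpace V]

theorem ofReal_re_fourier_bumpC (w : V) :
    ((𝓕 (bumpC V : V → ℂ) w).re : ℂ) = 𝓕 (bumpC V : V → ℂ) w :=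
  Real.ofReal_re_fourier_of_even (bump V).neg w

theorem fourier_bumpC_zero : 𝓕 (bumpC V : V → ℂ) 0 = ((∫ v, bump V v : ℝ) : ℂ) := by
  simp only [Real.fourier_eq, inner_zero_right, neg_zero, AddChar.map_zero_eq_one, one_smul]
  exact integral_ofReal

variable (V) in
def kernelC : 𝓢(V, ℂ) :=
  𝓕⁻ (SchwartzMap.convolution (ContinuousLinearMap.mul ℂ ℂ) (bumpC V) (bumpC V))

theorem kernelC_apply (x : V) : kernelC V x = 𝓕 (bumpC V : V → ℂ) (-x) ^ 2 := by
  rw [kernelC, SchwartzMap.fourierInv_coe, Real.fourierInv_eq_fourier_neg,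
    ← SchwartzMap.fourier_coe, SchwartzMap.fourier_convolution, SchwartzMap.pairing_apply_apply,
    SchwartzMap.fourier_coe, ContinuousLinearMap.mul_apply', sq]

theorem kernelC_eq_ofReal (x : V) :
    kernelC V x = (((𝓕 (bumpC V : V → ℂ) (-x)).re ^ 2 : ℝ) : ℂ) := by
  rw [kernelC_apply, Complex.ofReal_pow, ofReal_re_fourier_bumpC]

theorem support_fourier_kernelC : Function.support (𝓕 (kernelC V : V → ℂ)) ⊆ ball 0 1 := by
  rw [← SchwartzMap.fourier_coe, kernelC, FourierTransform.fourier_fourierInv_eq,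
    funext (SchwartzMap.convolution_apply _ _ _)]
  refine (support_convolution_subset (L := ContinuousLinearMap.mul ℂ ℂ)).trans ?_
  rw [support_bumpC, ball_add_ball (by norm_num) (by norm_num)]
  norm_num

variable (V) in
def kernel : 𝓢(V, ℝ) := SchwartzMap.postcompCLM Complex.reCLM (kernelC V)

theorem kernel_apply (x : V) : kernel V x = (𝓕 (bumpC V : V → ℂ) (-x)).re ^ 2 := by
  rw [kernel, SchwartzMap.postcompCLM_apply, Complex.reCLM_apply, kernelC_eq_ofReal,
    Complex.ofReal_re]

theorem ofReal_kernel (x : V) : (kernel V x : ℂ) = kernelC V x := by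
  rw [kernel_apply, kernelC_eq_ofReal]

theorem kernel_nonneg (x : V) : 0 ≤ kernel V x := by
  rw [kernel_apply]
  positivity

theorem kernel_zero_pos : 0 < kernel V 0 := by
  rw [kernel_apply, neg_zero, fourier_bumpC_zero, Complex.ofReal_re]
  exact pow_pos (bump V).integral_pos 2

theorem support_fourier_kernel : Function.support (𝓕 fun x ↦ (kernel V x : ℂ)) ⊆ ball 0 1 := by
  simpa only [ofReal_kernel] using support_fourier_kernelC

end BandlimitedKernel

section Cube

variable {d : ℕ}

theorem exists_cube_subset_of_mem_nhds {x : Ed d} {U : Set (Ed d)} (hU : U ∈ nhds x) :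
    ∃ s > 0, cube x s ⊆ U := by
  have hU' : WithLp.toLp 2 ⁻¹' U ∈ nhds (WithLp.ofLp x) :=
    (PiLp.continuous_toLp 2 _).continuousAt.preimage_mem_nhds (by simpa using hU)
  obtain ⟨ε, hε, hεU⟩ := Metric.mem_nhds_iff.1 hU'
  refine ⟨ε, hε, fun y hy ↦ hεU ?_⟩
  rw [mem_ball, dist_pi_lt_iff hε]
  intro i
  rw [Real.dist_eq]
  linarith [hy i]

theorem smul_sub_mem_cube {x y : Ed d} {s c : ℝ} (hc : 0 < c) (hy : y ∈ cube x (s * c⁻¹)) :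
    c • (y - x) ∈ cube 0 s := by
  intro i
  simp only [PiLp.smul_apply, PiLp.sub_apply, smul_eq_mul, PiLp.zero_apply, sub_zero, abs_mul,
    abs_of_pos hc]
  calc c * |y i - x i| ≤ c * (s * c⁻¹ / 2) := by gcongr; exact hy i
    _ = s / 2 := by field_simp

end Cube

/-- **Deterministic anti-concentration.**
For every dimension `d` there are constants `C, c > 0` depending only on `d` with the
following property. Let `μ` be a locally finite nonnegative Borel measure on `ℝ^d` and
`ρ, b > 0` be such that `∫ φ dμ = ρ ∫ φ dx` for every nonnegative Schwartz function `φ`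
whose Fourier transform is supported in the open ball `B(0; b)`. Then
`μ(Q) ≤ c ρ b^{-d}` for every axis-parallel cube `Q` of side length `C b⁻¹`. -/
theorem deterministic_anti_concentration (d : ℕ) :
    ∃ C c : ℝ, 0 < C ∧ 0 < c ∧
      ∀ (μ : Measure (Ed d)), IsLocallyFiniteMeasure μ →
        ∀ (ρ b : ℝ), 0 < ρ → 0 < b →
          (∀ φ : SchwartzMap (Ed d) ℝ, (∀ x, 0 ≤ φ x) →
            Function.support (𝓕 (fun x => (φ x : ℂ))) ⊆ ball (0 : Ed d) b →
            (∫⁻ x, ENNReal.ofReal (φ x) ∂μ) = ENNReal.ofReal (ρ * ∫ x, φ x)) →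
          ∀ x : Ed d, μ (cube x (C * b⁻¹)) ≤ ENNReal.ofReal (c * ρ * b ^ (-(d : ℤ))) := by
  open BandlimitedKernel in
  set Φ := kernel (Ed d)
  have hδ : 0 < Φ 0 / 2 := half_pos kernel_zero_pos
  obtain ⟨C, hC, hCΦ⟩ := exists_cube_subset_of_mem_nhds
    ((isOpen_lt continuous_const Φ.continuous).mem_nhds (half_lt_self kernel_zero_pos))
  have hΦint : 0 < ∫ x, Φ x := integral_pos_of_integrable_nonneg_nonzero Φ.continuous
    Φ.integrable kernel_nonneg kernel_zero_pos.ne'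
  refine ⟨C, (∫ x, Φ x) / (Φ 0 / 2), hC, by positivity, fun μ _ ρ b _ hb hμ x₀ ↦ ?_⟩
  set φ := Φ.rescale hb.ne' x₀
  have hφ : ∀ y ∈ cube x₀ (C * b⁻¹), Φ 0 / 2 ≤ φ y := fun y hy ↦ (hCΦ (smul_sub_mem_cube hb hy)).le
  have hφμ := hμ φ (fun y ↦ kernel_nonneg _) (by
    have := Real.support_fourier_comp_smul_sub_subset hb support_fourier_kernel x₀
    rwa [mul_one] at this)
  calc μ (cube x₀ (C * b⁻¹))
      ≤ μ {y | ENNReal.ofReal (Φ 0 / 2) ≤ ENNReal.ofReal (φ y)} :=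
        measure_mono fun y hy ↦ ENNReal.ofReal_le_ofReal (hφ y hy)
    _ ≤ (∫⁻ y, ENNReal.ofReal (φ y) ∂μ) / ENNReal.ofReal (Φ 0 / 2) :=
        meas_ge_le_lintegral_div (by fun_prop) (by simpa using hδ) ENNReal.ofReal_ne_top
    _ = ENNReal.ofReal ((∫ x, Φ x) / (Φ 0 / 2) * ρ * b ^ (-(d : ℤ))) := by
        rw [hφμ, ← ENNReal.ofReal_div_of_pos hδ]
        congr 1
        simp only [φ, SchwartzMap.rescale_apply, integral_comp_smul_sub,
          finrank_euclideanSpace_fin, zpow_neg, zpow_natCast, smul_eq_mul,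
          abs_of_pos (inv_pos.2 (pow_pos hb d))]
        ring
end
end

section
/- Let $S : \mathbb{R}^d \to [0,\infty)$ be a measurable function, and let $m$ be a positive integer such that: (i) $\int_{\mathbb{R}^d} S(\xi)\,(1+|\xi|)^{-2d-m}\,\mathrm{d}\xi < \infty$, and (ii) there exist $C_m > 0$ and $0 < \epsilon_m < 1$ with $S(\xi) \le C_m |\xi|^{m+d}$ for all $|\xi| \le \epsilon_m$. Then for every Schwartz function $\varphi : \mathbb{R}^d \to \mathbb{C}$ there exists a constant $C(\varphi, m) > 0$ such that for all $L > 1$, $\int_{\mathbb{R}^d} L^{2d}\,|\mathcal{F}\varphi(L\xi)|^2\, S(\xi)\,\mathrm{d}\xi \le C(\varphi, m)\, L^{-m}$, where $L^d \mathcal{F}\varphi(L\xi)$ is the Fourier transform of the rescaled function $z \mapsto \varphi(z/L)$. -/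
open MeasureTheory Metric
open scoped FourierTransform RealInnerProductSpace BigOperators

noncomputable section

private lemma aux_pow_mul_inv (x : ℝ) (a b : ℕ) (hx : 0 < x) :
    x ^ a * (x ^ (a + b))⁻¹ = (x ^ b)⁻¹ := by
  rw [pow_add, mul_inv, ← mul_assoc, mul_inv_cancel₀ (by positivity), one_mul]

set_option maxHeartbeats 1000000 in
/-- **Analytic core of the super-polynomial variance decay.**
Let `S : ℝ^d → [0, ∞)` be measurable and `m ≥ 1` be such that
(i) `∫ S(ξ) (1+|ξ|)^{-2d-m} dξ < ∞`, and (ii) `S(ξ) ≤ C_m |ξ|^{m+d}` for `|ξ| ≤ ε_m`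
with `0 < ε_m < 1`. Then for every Schwartz function `φ` there is `C(φ, m) > 0` such that
for all `L > 1`, `∫ L^{2d} |𝓕φ(Lξ)|² S(ξ) dξ ≤ C(φ, m) L⁻ᵐ`.
(The left-hand side is the variance of the linear statistic of `φ(·/L)` for a random
measure with structure function `S`.) -/
theorem rescaled_fourier_integral_decay
    (d : ℕ) (S : Ed d → ℝ) (hSmeas : Measurable S) (hSnonneg : ∀ ξ, 0 ≤ S ξ)
    (m : ℕ) (hm : 0 < m)
    (hint : Integrable (fun ξ : Ed d => S ξ * (1 + ‖ξ‖) ^ (-(2 * (d : ℤ) + m))))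
    (hloc : ∃ C_m > (0 : ℝ), ∃ ε_m : ℝ, 0 < ε_m ∧ ε_m < 1 ∧
      ∀ ξ : Ed d, ‖ξ‖ ≤ ε_m → S ξ ≤ C_m * ‖ξ‖ ^ (m + d)) :
    ∀ φ : SchwartzMap (Ed d) ℂ, ∃ C > (0 : ℝ), ∀ L : ℝ, 1 < L →
      (∫ ξ : Ed d, L ^ (2 * d) * ‖𝓕 (fun x => (φ x : ℂ)) (L • ξ)‖ ^ 2 * S ξ)
        ≤ C * L ^ (-(m : ℤ)) := by
  obtain ⟨Cm, hCm, ε, hε0, hε1, hSle⟩ := hloc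
  intro φ
  obtain ⟨ψ, hψ⟩ : ∃ ψ : SchwartzMap (Ed d) ℂ, ⇑ψ = 𝓕 (fun x => (φ x : ℂ)) :=
    ⟨SchwartzMap.fourierTransformCLM ℝ φ, rfl⟩
  set k : ℕ := 2 * d + m with hk
  -- decay bound for ψ
  obtain ⟨A, hA0, hA⟩ : ∃ A > (0 : ℝ), ∀ η : Ed d, (1 + ‖η‖) ^ k * ‖ψ η‖ ≤ A := by
    refine ⟨2 ^ k * (Finset.Iic (k, 0)).sup
      (fun p => SchwartzMap.seminorm ℝ p.1 p.2) ψ + 1, ?_, ?_⟩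
    · have h0 : (0:ℝ) ≤ ((Finset.Iic (k, 0)).sup
        (fun p => SchwartzMap.seminorm ℝ p.1 p.2)) ψ := apply_nonneg _ _
      positivity
    · intro η
      have h := SchwartzMap.one_add_le_sup_seminorm_apply (𝕜 := ℝ) (m := (k, 0))
        (k := k) (n := 0) le_rfl le_rfl ψ η
      rw [norm_iteratedFDeriv_zero] at h
      linarith
  have hF2 : ∀ η : Ed d, ‖ψ η‖ ^ 2 ≤ A ^ 2 * ((1 + ‖η‖) ^ (2 * k))⁻¹ := by
    intro η
    have h1 : ((1 + ‖η‖) ^ k * ‖ψ η‖) ^ 2 ≤ A ^ 2 :=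
      pow_le_pow_left₀ (by positivity) (hA η) 2
    have h2 : (1 + ‖η‖) ^ (2 * k) * ‖ψ η‖ ^ 2 ≤ A ^ 2 := by
      calc (1 + ‖η‖) ^ (2 * k) * ‖ψ η‖ ^ 2 = ((1 + ‖η‖) ^ k * ‖ψ η‖) ^ 2 := by ring
        _ ≤ A ^ 2 := h1
    have hp : (0:ℝ) < (1 + ‖η‖) ^ (2 * k) := by positivity
    rw [← div_eq_mul_inv, le_div_iff₀ hp]
    linarith
  -- the auxiliary function for the near-zero part
  set g : Ed d → ℝ := fun η => ‖η‖ ^ (m + d) * ((1 + ‖η‖) ^ (2 * k))⁻¹ with hgdef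
  have hg_nonneg : ∀ η, 0 ≤ g η := fun η => by positivity
  have hg_int : Integrable g := by
    have hd : (Module.finrank ℝ (Ed d) : ℝ) < ((3 * d + m : ℕ) : ℝ) := by
      rw [finrank_euclideanSpace_fin]
      exact_mod_cast by omega
    have h1 : Integrable (fun η : Ed d => (1 + ‖η‖) ^ (-((3 * d + m : ℕ) : ℝ))) :=
      integrable_one_add_norm hd
    have h1' : Integrable (fun η : Ed d => ((1 + ‖η‖) ^ (3 * d + m : ℕ))⁻¹) := by
      refine h1.congr (Filter.Eventually.of_forall fun η => ?_)
      show ((1:ℝ) + ‖η‖) ^ (-((3 * d + m : ℕ) : ℝ)) = ((1 + ‖η‖) ^ (3 * d + m : ℕ))⁻¹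
      rw [Real.rpow_neg (by positivity), Real.rpow_natCast]
    refine h1'.mono' ?_ (Filter.Eventually.of_forall fun η => ?_)
    · apply Measurable.aestronglyMeasurable
      fun_prop
    · rw [Real.norm_of_nonneg (hg_nonneg η)]
      have h2k : (2 * k : ℕ) = (m + d) + (3 * d + m) := by omega
      calc g η ≤ (1 + ‖η‖) ^ (m + d) * ((1 + ‖η‖) ^ (2 * k))⁻¹ := by
            apply mul_le_mul_of_nonneg_right _ (by positivity)
            exact pow_le_pow_left₀ (norm_nonneg η) (by linarith [norm_nonneg η]) _
        _ = ((1 + ‖η‖) ^ (3 * d + m : ℕ))⁻¹ := by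
            rw [h2k, aux_pow_mul_inv _ _ _ (by positivity)]
  set J : ℝ := ∫ η : Ed d, g η with hJdef
  have hJ0 : 0 ≤ J := integral_nonneg hg_nonneg
  -- reformulate hint with ℕ powers
  have hint' : Integrable (fun ξ : Ed d => S ξ * ((1 + ‖ξ‖) ^ (2 * d + m : ℕ))⁻¹) := by
    refine hint.congr (Filter.Eventually.of_forall fun ξ => ?_)
    show S ξ * (1 + ‖ξ‖) ^ (-(2 * (d : ℤ) + m)) = S ξ * ((1 + ‖ξ‖) ^ (2 * d + m : ℕ))⁻¹
    have h : -(2 * (d : ℤ) + m) = -((2 * d + m : ℕ) : ℤ) := by push_cast; ring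
    rw [h, zpow_neg, zpow_natCast]
  set I₀ : ℝ := ∫ ξ : Ed d, S ξ * ((1 + ‖ξ‖) ^ (2 * d + m : ℕ))⁻¹ with hI₀def
  have hI0 : 0 ≤ I₀ :=
    integral_nonneg fun ξ => mul_nonneg (hSnonneg ξ) (by positivity)
  refine ⟨Cm * A ^ 2 * J + A ^ 2 * (ε ^ (2 * d + m))⁻¹ * I₀ + 1, ?_, ?_⟩
  · have h1 : 0 ≤ Cm * A ^ 2 * J := mul_nonneg (by positivity) hJ0
    have h2 : 0 ≤ A ^ 2 * (ε ^ (2 * d + m))⁻¹ * I₀ := mul_nonneg (by positivity) hI0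
    linarith
  intro L hL
  rw [← hψ]
  have hL0 : (0:ℝ) < L := lt_trans one_pos hL
  have hLm : (0:ℝ) < L ^ m := pow_pos hL0 m
  have hnsmul : ∀ ξ : Ed d, ‖L • ξ‖ = L * ‖ξ‖ := by
    intro ξ; rw [norm_smul, Real.norm_of_nonneg hL0.le]
  set G₁ : Ed d → ℝ :=
    fun ξ => Cm * A ^ 2 * L ^ (2 * d) * (L ^ (m + d))⁻¹ * g (L • ξ) with hG₁def
  set G₂ : Ed d → ℝ :=
    fun ξ => A ^ 2 * (ε ^ (2 * d + m))⁻¹ * (L ^ m)⁻¹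
      * (S ξ * ((1 + ‖ξ‖) ^ (2 * d + m : ℕ))⁻¹) with hG₂def
  have hG₁_nonneg : ∀ ξ, 0 ≤ G₁ ξ := fun ξ =>
    mul_nonneg (by positivity) (hg_nonneg _)
  have hG₂_nonneg : ∀ ξ, 0 ≤ G₂ ξ := fun ξ =>
    mul_nonneg (by positivity) (mul_nonneg (hSnonneg ξ) (by positivity))
  have hf_nonneg : ∀ ξ : Ed d, 0 ≤ L ^ (2 * d) * ‖ψ (L • ξ)‖ ^ 2 * S ξ := fun ξ =>
    mul_nonneg (by positivity) (hSnonneg ξ)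
  -- pointwise bound
  have hpoint : ∀ ξ : Ed d,
      L ^ (2 * d) * ‖ψ (L • ξ)‖ ^ 2 * S ξ ≤ G₁ ξ + G₂ ξ := by
    intro ξ
    rcases le_or_gt ‖ξ‖ ε with hξ | hξ
    · have h1 : L ^ (2 * d) * ‖ψ (L • ξ)‖ ^ 2 * S ξ ≤ G₁ ξ := by
        calc L ^ (2 * d) * ‖ψ (L • ξ)‖ ^ 2 * S ξ
            ≤ L ^ (2 * d) * (A ^ 2 * ((1 + ‖L • ξ‖) ^ (2 * k))⁻¹) * (Cm * ‖ξ‖ ^ (m + d)) := by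
              apply mul_le_mul
              · exact mul_le_mul_of_nonneg_left (hF2 (L • ξ)) (by positivity)
              · exact hSle ξ hξ
              · exact hSnonneg ξ
              · positivity
          _ = G₁ ξ := by
              show _ = Cm * A ^ 2 * L ^ (2 * d) * (L ^ (m + d))⁻¹
                * (‖L • ξ‖ ^ (m + d) * ((1 + ‖L • ξ‖) ^ (2 * k))⁻¹)
              rw [hnsmul ξ, mul_pow]
              field_simp
      linarith [hG₂_nonneg ξ]
    · have hcore : L ^ (2 * d) * ((1 + ‖L • ξ‖) ^ (2 * k))⁻¹
          ≤ (ε ^ (2 * d + m))⁻¹ * (L ^ m)⁻¹ * ((1 + ‖ξ‖) ^ (2 * d + m : ℕ))⁻¹ := by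
        rw [hnsmul ξ]
        have hb : (0:ℝ) < (1 + L * ‖ξ‖) ^ (2 * k) := by positivity
        have hdp : (0:ℝ) < ε ^ (2 * d + m) * (L ^ m * (1 + ‖ξ‖) ^ (2 * d + m)) := by positivity
        have hkey : L ^ (2 * d) * (ε ^ (2 * d + m) * (L ^ m * (1 + ‖ξ‖) ^ (2 * d + m)))
            ≤ (1 + L * ‖ξ‖) ^ (2 * k) := by
          have hb1 : (L * ε) ^ (2 * d + m) ≤ (1 + L * ‖ξ‖) ^ (2 * d + m) := by
            apply pow_le_pow_left₀ (by positivity)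
            nlinarith
          have hb2 : ((1:ℝ) + ‖ξ‖) ^ (2 * d + m) ≤ (1 + L * ‖ξ‖) ^ (2 * d + m) := by
            apply pow_le_pow_left₀ (by positivity)
            nlinarith [norm_nonneg ξ]
          calc L ^ (2 * d) * (ε ^ (2 * d + m) * (L ^ m * (1 + ‖ξ‖) ^ (2 * d + m)))
              = ((L * ε) ^ (2 * d + m)) * ((1 + ‖ξ‖) ^ (2 * d + m)) := by
                ring
            _ ≤ ((1 + L * ‖ξ‖) ^ (2 * d + m)) * ((1 + L * ‖ξ‖) ^ (2 * d + m)) :=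
                mul_le_mul hb1 hb2 (by positivity) (by positivity)
            _ = (1 + L * ‖ξ‖) ^ (2 * k) := by rw [hk]; ring
        calc L ^ (2 * d) * ((1 + L * ‖ξ‖) ^ (2 * k))⁻¹
            = L ^ (2 * d) / (1 + L * ‖ξ‖) ^ (2 * k) := by rw [div_eq_mul_inv]
          _ ≤ 1 / (ε ^ (2 * d + m) * (L ^ m * (1 + ‖ξ‖) ^ (2 * d + m))) := by
              rw [div_le_div_iff₀ hb hdp, one_mul]
              exact hkey
          _ = (ε ^ (2 * d + m))⁻¹ * (L ^ m)⁻¹ * ((1 + ‖ξ‖) ^ (2 * d + m : ℕ))⁻¹ := by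
              rw [one_div, mul_inv, mul_inv, ← mul_assoc]
      have h2 : L ^ (2 * d) * ‖ψ (L • ξ)‖ ^ 2 * S ξ ≤ G₂ ξ := by
        calc L ^ (2 * d) * ‖ψ (L • ξ)‖ ^ 2 * S ξ
            ≤ L ^ (2 * d) * (A ^ 2 * ((1 + ‖L • ξ‖) ^ (2 * k))⁻¹) * S ξ := by
              apply mul_le_mul_of_nonneg_right _ (hSnonneg ξ)
              exact mul_le_mul_of_nonneg_left (hF2 (L • ξ)) (by positivity)
          _ = A ^ 2 * S ξ * (L ^ (2 * d) * ((1 + ‖L • ξ‖) ^ (2 * k))⁻¹) := by ring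
          _ ≤ A ^ 2 * S ξ * ((ε ^ (2 * d + m))⁻¹ * (L ^ m)⁻¹
                * ((1 + ‖ξ‖) ^ (2 * d + m : ℕ))⁻¹) :=
              mul_le_mul_of_nonneg_left hcore
                (mul_nonneg (by positivity) (hSnonneg ξ))
          _ = G₂ ξ := by
              show _ = A ^ 2 * (ε ^ (2 * d + m))⁻¹ * (L ^ m)⁻¹
                * (S ξ * ((1 + ‖ξ‖) ^ (2 * d + m : ℕ))⁻¹)
              ring
      linarith [hG₁_nonneg ξ]
  -- integrability
  have hG₁_int : Integrable G₁ :=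
    (hg_int.comp_smul (ne_of_gt hL0)).const_mul _
  have hG₂_int : Integrable G₂ := hint'.const_mul _
  have hf_meas : AEStronglyMeasurable
      (fun ξ : Ed d => L ^ (2 * d) * ‖ψ (L • ξ)‖ ^ 2 * S ξ) volume := by
    apply Measurable.aestronglyMeasurable
    have h1 : Measurable fun ξ : Ed d => ‖ψ (L • ξ)‖ ^ 2 :=
      (((ψ.continuous.comp (continuous_const_smul L)).norm.pow 2)).measurable
    exact (measurable_const.mul h1).mul hSmeas
  have hf_int : Integrable (fun ξ : Ed d => L ^ (2 * d) * ‖ψ (L • ξ)‖ ^ 2 * S ξ) := by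
    refine (hG₁_int.add hG₂_int).mono' hf_meas (Filter.Eventually.of_forall fun ξ => ?_)
    rw [Real.norm_of_nonneg (hf_nonneg ξ)]
    exact hpoint ξ
  -- value of ∫ G₁
  have hG₁_val : ∫ ξ : Ed d, G₁ ξ = Cm * A ^ 2 * J * (L ^ m)⁻¹ := by
    have hcs : ∫ ξ : Ed d, g (L • ξ)
        = |(L ^ Module.finrank ℝ (Ed d))⁻¹| • ∫ η : Ed d, g η :=
      MeasureTheory.Measure.integral_comp_smul volume g L
    rw [finrank_euclideanSpace_fin] at hcs
    have habs : |(L ^ d)⁻¹| = (L ^ d)⁻¹ := abs_of_pos (by positivity)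
    calc ∫ ξ : Ed d, G₁ ξ
        = Cm * A ^ 2 * L ^ (2 * d) * (L ^ (m + d))⁻¹ * ∫ ξ : Ed d, g (L • ξ) :=
          integral_const_mul _ _
      _ = Cm * A ^ 2 * L ^ (2 * d) * (L ^ (m + d))⁻¹ * ((L ^ d)⁻¹ * J) := by
          rw [hcs, habs, smul_eq_mul, hJdef]
      _ = Cm * A ^ 2 * J * (L ^ m)⁻¹ := by
          have hLne : L ≠ 0 := hL0.ne'
          field_simp
          ring
  have hG₂_val : ∫ ξ : Ed d, G₂ ξ
      = A ^ 2 * (ε ^ (2 * d + m))⁻¹ * (L ^ m)⁻¹ * I₀ := by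
    rw [hI₀def]
    exact integral_const_mul _ _
  have hzpow : L ^ (-(m : ℤ)) = (L ^ m)⁻¹ := by
    rw [zpow_neg, zpow_natCast]
  rw [hzpow]
  calc (∫ ξ : Ed d, L ^ (2 * d) * ‖ψ (L • ξ)‖ ^ 2 * S ξ)
      ≤ ∫ ξ : Ed d, (G₁ ξ + G₂ ξ) :=
        integral_mono hf_int (hG₁_int.add hG₂_int) hpoint
    _ = (∫ ξ : Ed d, G₁ ξ) + ∫ ξ : Ed d, G₂ ξ := integral_add hG₁_int hG₂_int
    _ = (Cm * A ^ 2 * J + A ^ 2 * (ε ^ (2 * d + m))⁻¹ * I₀) * (L ^ m)⁻¹ := by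
        rw [hG₁_val, hG₂_val]; ring
    _ ≤ (Cm * A ^ 2 * J + A ^ 2 * (ε ^ (2 * d + m))⁻¹ * I₀ + 1) * (L ^ m)⁻¹ := by
        apply mul_le_mul_of_nonneg_right _ (by positivity)
        linarith

end
end
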